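/- Let u be a smooth harmonic map from S³ into S² such that ∫_{S³} (|du|⁴ − 2|du ⊗̇ du|²) dvol_{S³} ≥ 0. Then at every point x ∈ S³, either du_x = 0 or du_x is horizontally conformal, i.e. the restriction of du_x to the orthogonal complement of ker du_x is a conformal linear isomorphism onto T_{u(x)}S²; hence u is a harmonic horizontally weakly conformal map (a harmonic morphism) from S³ to S². -/

import Mathlib

/- Common setup: we work extrinsically. `S³` is the unit sphere of `E4 = ℝ⁴` and
`S²` the unit sphere of `E3 = ℝ³`. A (smooth) map `u : S³ → S²` is represented by an
ambient map `U : E4 → E3` which is smooth on a neighbourhood of the sphere and maps the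
sphere to the unit sphere.  Tangential differentials, the energy density `|du|²`, the
Laplace–Beltrami operator (computed via the degree-zero homogeneous extension), the
canonical frame `e_i`, the conformal Killing fields `X^k`, the surface measure
(`Measure.toSphere` of the Lebesgue measure) and the index form are all defined below. -/

open MeasureTheory Metric
open scoped RealInnerProductSpace

noncomputable section

abbrev E4 : Type := EuclideanSpace ℝ (Fin 4)
abbrev E3 : Type := EuclideanSpace ℝ (Fin 3)

/-- The unit 3-sphere in `ℝ⁴`, as a subset. -/
def S3 : Set E4 := Metric.sphere (0:E4) 1

/-- The unit 2-sphere in `ℝ³`, as a subset. -/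
def S2 : Set E3 := Metric.sphere (0:E3) 1

/-- Canonical orthonormal basis vectors of `ℝ⁴`. -/
def b4 (i : Fin 4) : E4 := EuclideanSpace.single i 1

/-- Canonical orthonormal basis vectors of `ℝ³`. -/
def b3 (i : Fin 3) : E3 := EuclideanSpace.single i 1

/-- Orthogonal projection onto the tangent space `T_x S³` (for `x` in the unit sphere). -/
def tproj (x v : E4) : E4 := v - ⟪x, v⟫ • x

/-- Orthogonal projection onto the tangent space `T_y S²` (for `y` in the unit sphere). -/
def tproj3 (y w : E3) : E3 := w - ⟪y, w⟫ • y

/-- Tangential differential: for `x ∈ S³`, `dS U x v` is the differential of the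
restriction `U|_{S³}` at `x` applied to the tangential part of `v`. -/
def dS (U : E4 → E3) (x v : E4) : E3 := fderiv ℝ U x (tproj x v)

/-- Scalar version of the tangential differential, for functions `S³ → ℝ`. -/
def dSR (f : E4 → ℝ) (x v : E4) : ℝ := fderiv ℝ f x (tproj x v)

/-- The energy density `|du|²` of the restriction of `U` to `S³` at `x ∈ S³`. -/
def eDen (U : E4 → E3) (x : E4) : ℝ := ∑ i, ‖dS U x (b4 i)‖^2

/-- Degree-zero homogeneous extension of the restriction of `U` to `S³`. -/
def homExt (U : E4 → E3) : E4 → E3 := fun y => U (‖y‖⁻¹ • y)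

/-- The (negative) Laplace–Beltrami operator of the round `S³` applied to (the restriction
of) `U`, computed at `x ∈ S³` as the Euclidean Laplacian of the degree-zero homogeneous
extension. -/
def sphLap (U : E4 → E3) (x : E4) : E3 :=
  ∑ i, fderiv ℝ (fun y => fderiv ℝ (homExt U) y (b4 i)) x (b4 i)

/-- `U : E4 → E3` represents a smooth harmonic map from `S³` to `S²`:
it is smooth, sphere-valued on `S³`, and satisfies `Δ_{S³} u = -u |du|²`. -/
def IsHarmonicMapS3S2 (U : E4 → E3) : Prop :=
  ContDiff ℝ (⊤ : ℕ∞) U ∧ (∀ x ∈ S3, ‖U x‖ = 1) ∧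
    ∀ x ∈ S3, sphLap U x = -(eDen U x) • U x

/-- The surface measure on the unit sphere `S³ ⊂ ℝ⁴` (up to a positive constant). -/
def sMes : Measure (Metric.sphere (0:E4) 1) := (volume : Measure E4).toSphere

/-- Integral over `S³` with respect to the surface measure. -/
def sInt (f : E4 → ℝ) : ℝ := ∫ x : Metric.sphere (0:E4) 1, f ↑x ∂sMes

/-- The conformal Killing fields `X^k(x) = ε_k - x_k x` on `S³`. -/
def ckf (k : Fin 4) (x : E4) : E4 := EuclideanSpace.single k 1 - x k • x

/-- The index (second variation) form `∫_{S³} (|dw|² - |w|²|du|²)` of the Dirichlet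
energy at `u`, evaluated on a section `w` of `u⁻¹TS²`. -/
def Qform (U W : E4 → E3) : ℝ := sInt (fun x => eDen W x - ‖W x‖^2 * eDen U x)

/-- The Morse index of the harmonic map represented by `U` is at least `n`: there are `n`
sections of `u⁻¹TS²` spanning a space on which the second variation is negative definite. -/
def IndexAtLeast (U : E4 → E3) (n : ℕ) : Prop :=
  ∃ W : Fin n → (E4 → E3), (∀ j, ContDiff ℝ (⊤ : ℕ∞) (W j)) ∧
    (∀ j, ∀ x ∈ S3, ⟪U x, W j x⟫ = 0) ∧
    ∀ c : Fin n → ℝ, c ≠ 0 → Qform U (fun x => ∑ j, c j • W j x) < 0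

/-- Index map for the cyclic frame: `i ∈ ℤ/3` corresponds to the coordinate `x_{i+1}`,
i.e. to the index `i.val ∈ {0,1,2}` of `Fin 4`; the fourth coordinate is `3`. -/
def cIdx (i : ZMod 3) : Fin 4 := ⟨i.val, by have := ZMod.val_lt i; omega⟩

/-- The global orthonormal frame `e_i` of `S³` (defined on all of `ℝ⁴`),
`e_i = x_i ∂_{i+1} - x_{i+1} ∂_i + x_{i-1} ∂_4 - x_4 ∂_{i-1}` with cyclic indices. -/
def eVF (i : ZMod 3) (x : E4) : E4 :=
  x (cIdx i) • b4 (cIdx (i+1)) - x (cIdx (i+1)) • b4 (cIdx i)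
    + x (cIdx (i-1)) • b4 3 - x 3 • b4 (cIdx (i-1))

/-- The coframe `e_i^* = x_i dx_{i+1} - x_{i+1} dx_i + x_{i-1} dx_4 - x_4 dx_{i-1}`,
as a family of 1-forms on `ℝ⁴` (to be restricted to `S³`). -/
def eForm (i : ZMod 3) (x v : E4) : ℝ :=
  x (cIdx i) * v (cIdx (i+1)) - x (cIdx (i+1)) * v (cIdx i)
    + x (cIdx (i-1)) * v 3 - x 3 * v (cIdx (i-1))

/-- Lie bracket of two vector fields on `ℝ⁴`. -/
def lieB (X Y : E4 → E4) (x : E4) : E4 := fderiv ℝ Y x (X x) - fderiv ℝ X x (Y x)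

/-- The Levi-Civita covariant derivative of the round metric on `S³` (Gauss formula):
for a vector field `Y` tangent to `S³`, a point `x ∈ S³` and `v ∈ T_x S³`,
`∇_v Y = P_x (D_v Y)`. -/
def covD (Y : E4 → E4) (v x : E4) : E4 := tproj x (fderiv ℝ Y x v)

/-- Cross product on `E3 = ℝ³`. -/
def cross3 (a c : E3) : E3 :=
  (EuclideanSpace.equiv (Fin 3) ℝ).symm
    (crossProduct ((EuclideanSpace.equiv (Fin 3) ℝ) a) ((EuclideanSpace.equiv (Fin 3) ℝ) c))

/-- Orthogonal projection onto the tangent plane `T_u S²`, for `u ∈ S²`. -/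
def projT (u v : E3) : E3 := v - ⟪u, v⟫ • u

/-- The canonical tangential extension of a vector `w ∈ T_x S³` to a tangent vector
field on `S³`. -/
def tExt (w : E4) : E4 → E4 := fun y => w - ⟪y, w⟫ • y

/-- Covariant derivative along the frame field `e_i` of an `ℝ³`-valued 1-form `A` on `S³`:
`(∇_{e_i} A)(w) = e_i ⋅ (A(W)) - A(∇_{e_i} W)` where `W` is the canonical tangential
extension of `w`. -/
def oneFormD (A : E4 → E4 → E3) (i : ZMod 3) : E4 → E4 → E3 :=
  fun x w => fderiv ℝ (fun y => A y (tExt w y)) x (eVF i x) - A x (covD (tExt w) (eVF i x) x)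

/-- Tangential differential of maps defined near `S² ⊂ ℝ³`. -/
def dS2 (V : E3 → E3) (y w : E3) : E3 := fderiv ℝ V y (tproj3 y w)

/-- Energy density on `S²`. -/
def eDen2 (V : E3 → E3) (y : E3) : ℝ := ∑ i, ‖dS2 V y (b3 i)‖^2

/-- Degree-zero homogeneous extension, `ℝ³` version. -/
def homExt2 (V : E3 → E3) : E3 → E3 := fun y => V (‖y‖⁻¹ • y)

/-- Laplace–Beltrami operator of the round `S²`. -/
def sphLap2 (V : E3 → E3) (y : E3) : E3 :=
  ∑ i, fderiv ℝ (fun z => fderiv ℝ (homExt2 V) z (b3 i)) y (b3 i)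

/-- `V : E3 → E3` represents a smooth harmonic map from `S²` to `S²`. -/
def IsHarmonicMapS2S2 (V : E3 → E3) : Prop :=
  ContDiff ℝ (⊤ : ℕ∞) V ∧ (∀ y ∈ S2, ‖V y‖ = 1) ∧
    ∀ y ∈ S2, sphLap2 V y = -(eDen2 V y) • V y

/-- First three coordinates, `x' = (x₁,x₂,x₃) ∈ ℝ³` of `x ∈ ℝ⁴`. -/
def trunc (x : E4) : E3 := (EuclideanSpace.equiv (Fin 3) ℝ).symm ![x 0, x 1, x 2]

/-- The "suspension" `u(x) = v(x'/|x'|)` of a map `v` of `S²`. -/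
def susp (V : E3 → E3) : E4 → E3 := fun x => V (‖trunc x‖⁻¹ • trunc x)

/-- The first complex coordinate `z = x₁ + i x₂` on `ℝ⁴ = ℂ²`. -/
def zc (x : E4) : ℂ := ⟨x 0, x 1⟩

/-- The second complex coordinate `w = x₃ + i x₄` on `ℝ⁴ = ℂ²`. -/
def wc (x : E4) : ℂ := ⟨x 2, x 3⟩

/-- The point of `S² ⊂ ℝ³ = ℂ × ℝ` corresponding to `[p : q] ∈ ℂP¹`, namely
`(2 p q̄ , |p|² - |q|²)/(|p|² + |q|²)`.  (In particular the Hopf map is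
`𝔥(z,w) = projPt z w` for `(z,w) ∈ S³`, and a holomorphic map `ℂP¹ → ℂP¹` is
`[p:q] ↦ [P(p,q) : Q(p,q)]` for a pair of homogeneous polynomials of the same degree
without common zeros in `ℂ² \ {0}`.) -/
def projPt (p q : ℂ) : E3 :=
  (Complex.normSq p + Complex.normSq q)⁻¹ •
    (EuclideanSpace.equiv (Fin 3) ℝ).symm
      ![(2 * (p * (starRingEnd ℂ) q)).re, (2 * (p * (starRingEnd ℂ) q)).im,
        Complex.normSq p - Complex.normSq q]

section Aux

variable (U : E4 → E3) (x : E4)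

/-- `dS U x` as a continuous linear map. -/
def dSC : E4 →L[ℝ] E3 :=
  (fderiv ℝ U x).comp (ContinuousLinearMap.id ℝ E4 - (innerSL ℝ x).smulRight x)

lemma dS_eq_dSC (v : E4) : dS U x v = dSC U x v := by
  simp [dS, dSC, tproj]

lemma sum_single (v : E4) : ∑ i, v i • b4 i = v := by
  simpa [b4, EuclideanSpace.basisFun_apply, EuclideanSpace.basisFun_repr] using
    (EuclideanSpace.basisFun (Fin 4) ℝ).sum_repr v

end Aux
section Aux2

variable {U : E4 → E3} {x : E4}

lemma inner_self_one {F : Type*} [NormedAddCommGroup F] [InnerProductSpace ℝ F]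
    {y : F} (hy : ‖y‖ = 1) : ⟪y, y⟫ = 1 := by
  rw [real_inner_self_eq_norm_sq, hy]; norm_num

lemma tproj_self (hx : ‖x‖ = 1) : tproj x x = 0 := by
  rw [tproj, inner_self_one hx, one_smul, sub_self]

lemma dS_self (hx : ‖x‖ = 1) : dS U x x = 0 := by
  rw [dS, tproj_self hx, map_zero]

lemma inner_tproj_self (hx : ‖x‖ = 1) (v : E4) : ⟪x, tproj x v⟫ = 0 := by
  rw [tproj, inner_sub_right, real_inner_smul_right, inner_self_one hx]; ring

lemma horth_unit (hU1 : ContDiff ℝ (⊤ : ℕ∞) U) (hU2 : ∀ y ∈ S3, ‖U y‖ = 1)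
    (hx : ‖x‖ = 1) {e : E4} (he : ‖e‖ = 1) (hxe : ⟪x, e⟫ = 0) :
    ⟪U x, fderiv ℝ U x e⟫ = 0 := by
  set c : ℝ → E4 := fun t => Real.cos t • x + Real.sin t • e with hc
  have hcmem : ∀ t, c t ∈ S3 := by
    intro t
    have hxe' : ⟪e, x⟫ = 0 := by rw [real_inner_comm]; exact hxe
    have h1 : ⟪c t, c t⟫ = 1 := by
      simp only [hc, inner_add_add_self, real_inner_smul_left, real_inner_smul_right,
        inner_self_one hx, inner_self_one he, hxe, hxe']
      have := Real.sin_sq_add_cos_sq t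
      ring_nf
      nlinarith [Real.sin_sq_add_cos_sq t]
    have h2 : ‖c t‖ ^ 2 = 1 := by rw [← real_inner_self_eq_norm_sq]; exact h1
    have : ‖c t‖ = 1 := by nlinarith [norm_nonneg (c t)]
    simpa [S3] using this
  have hc0 : c 0 = x := by simp [hc]
  have hcd : HasDerivAt c e 0 := by
    have h1 : HasDerivAt (fun t => Real.cos t • x) ((-Real.sin 0) • x) 0 :=
      (Real.hasDerivAt_cos 0).smul_const x
    have h2 : HasDerivAt (fun t => Real.sin t • e) ((Real.cos 0) • e) 0 :=
      (Real.hasDerivAt_sin 0).smul_const e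
    have h3 := h1.add h2
    simp only [Real.sin_zero, Real.cos_zero, neg_zero, zero_smul, one_smul, zero_add] at h3
    rw [hc]; exact h3
  have hUc : HasDerivAt (fun t => U (c t)) (fderiv ℝ U x e) 0 := by
    have hdU : HasFDerivAt U (fderiv ℝ U x) (c 0) := by
      rw [hc0]; exact (hU1.differentiable (by simp) x).hasFDerivAt
    exact hdU.comp_hasDerivAt 0 hcd
  have hf : HasDerivAt (fun t => ⟪U (c t), U (c t)⟫)
      (⟪U (c 0), fderiv ℝ U x e⟫ + ⟪fderiv ℝ U x e, U (c 0)⟫) 0 := hUc.inner ℝ hUc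
  have hconst : (fun t => ⟪U (c t), U (c t)⟫) = fun _ => (1:ℝ) := by
    funext t
    rw [real_inner_self_eq_norm_sq, hU2 _ (hcmem t)]; norm_num
  have h0 : HasDerivAt (fun _ : ℝ => (1:ℝ))
      (⟪U (c 0), fderiv ℝ U x e⟫ + ⟪fderiv ℝ U x e, U (c 0)⟫) 0 := hconst ▸ hf
  have := (hasDerivAt_const (0:ℝ) (1:ℝ)).unique h0
  rw [hc0] at this
  have hcomm := real_inner_comm (U x) (fderiv ℝ U x e)
  linarith

lemma horth (hU1 : ContDiff ℝ (⊤ : ℕ∞) U) (hU2 : ∀ y ∈ S3, ‖U y‖ = 1)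
    (hx : ‖x‖ = 1) (v : E4) : ⟪U x, dS U x v⟫ = 0 := by
  set w := tproj x v with hw
  rcases eq_or_ne w 0 with h0 | h0
  · rw [dS, ← hw, h0, map_zero, inner_zero_right]
  · have hnw : ‖w‖ ≠ 0 := norm_ne_zero_iff.mpr h0
    set e := ‖w‖⁻¹ • w with he
    have hee : ‖e‖ = 1 := by
      rw [he, norm_smul]; simp [abs_of_nonneg (inv_nonneg.mpr (norm_nonneg w)), inv_mul_cancel₀ hnw]
    have hxe : ⟪x, e⟫ = 0 := by
      rw [he, real_inner_smul_right, hw, inner_tproj_self hx]; ring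
    have hwe : w = ‖w‖ • e := by rw [he, smul_smul, mul_inv_cancel₀ hnw, one_smul]
    rw [dS, ← hw, hwe, ContinuousLinearMap.map_smul, real_inner_smul_right, horth_unit hU1 hU2 hx hee hxe, mul_zero]

end Aux2
section Aux3

variable {U : E4 → E3} {x : E4}

/-- Master pointwise representation: at `x ∈ S³` the tangential differential is
`dS U x v = ⟪p,v⟫ f₁ + ⟪q,v⟫ f₂` for an orthonormal pair `f₁ f₂ ⊥ U x` and `p, q ⊥ x`. -/
lemma master (hU1 : ContDiff ℝ (⊤ : ℕ∞) U) (hU2 : ∀ y ∈ S3, ‖U y‖ = 1) (hx : x ∈ S3) :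
    ∃ (f1 f2 : E3) (p q : E4),
      ‖f1‖ = 1 ∧ ‖f2‖ = 1 ∧ ⟪f1, f2⟫ = 0 ∧
      (∀ a : E3, ⟪U x, a⟫ = 0 → a = ⟪f1, a⟫ • f1 + ⟪f2, a⟫ • f2) ∧
      ⟪x, p⟫ = 0 ∧ ⟪x, q⟫ = 0 ∧
      (∀ v, dS U x v = ⟪p, v⟫ • f1 + ⟪q, v⟫ • f2) := by
  have hxn : ‖x‖ = 1 := by simpa [S3] using hx
  have hn : ‖U x‖ = 1 := hU2 x hx
  -- extend `U x` to an orthonormal basis of `E3`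
  obtain ⟨b, hb⟩ : ∃ b : OrthonormalBasis (Fin 3) ℝ E3, ∀ i ∈ ({0} : Set (Fin 3)),
      b i = (fun _ : Fin 3 => U x) i := by
    apply Orthonormal.exists_orthonormalBasis_extension_of_card_eq
    · simp [finrank_euclideanSpace_fin]
    · constructor
      · intro i; simpa using hn
      · intro i j hij
        exact absurd (Subtype.ext (by
          have hi := i.2; have hj := j.2
          simp only [Set.mem_singleton_iff] at hi hj
          rw [hi, hj])) hij
  have hb0 : b 0 = U x := hb 0 rfl
  refine ⟨b 1, b 2, ?_⟩
  have hnorm : ∀ i, ‖b i‖ = 1 := fun i => b.orthonormal.1 i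
  have hij : ∀ i j, i ≠ j → ⟪b i, b j⟫ = 0 := fun i j h => b.orthonormal.2 h
  have hdecomp : ∀ a : E3, ⟪U x, a⟫ = 0 → a = ⟪b 1, a⟫ • b 1 + ⟪b 2, a⟫ • b 2 := by
    intro a ha
    have := b.sum_repr' a
    rw [Fin.sum_univ_three, hb0, ha, zero_smul, zero_add] at this
    exact this.symm
  -- Riesz vectors
  set p : E4 := (EuclideanSpace.equiv (Fin 4) ℝ).symm (fun k => ⟪b 1, dS U x (b4 k)⟫) with hpdef
  set q : E4 := (EuclideanSpace.equiv (Fin 4) ℝ).symm (fun k => ⟪b 2, dS U x (b4 k)⟫) with hqdef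
  have hpk : ∀ k, p k = ⟪b 1, dS U x (b4 k)⟫ := fun k => rfl
  have hqk : ∀ k, q k = ⟪b 2, dS U x (b4 k)⟫ := fun k => rfl
  have hinner : ∀ (r : E4) (v : E4), ⟪r, v⟫ = ∑ i, r i * v i := by
    intro r v; rw [PiLp.inner_apply]; exact Finset.sum_congr rfl fun i _ => by simp [mul_comm]
  have hp : ∀ v, ⟪b 1, dS U x v⟫ = ⟪p, v⟫ := by
    intro v
    conv_lhs => rw [← sum_single v, dS_eq_dSC, map_sum, inner_sum]
    rw [hinner p v]
    refine Finset.sum_congr rfl fun i _ => ?_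
    rw [ContinuousLinearMap.map_smul, inner_smul_right, ← dS_eq_dSC, hpk i]; ring
  have hq : ∀ v, ⟪b 2, dS U x v⟫ = ⟪q, v⟫ := by
    intro v
    conv_lhs => rw [← sum_single v, dS_eq_dSC, map_sum, inner_sum]
    rw [hinner q v]
    refine Finset.sum_congr rfl fun i _ => ?_
    rw [ContinuousLinearMap.map_smul, inner_smul_right, ← dS_eq_dSC, hqk i]; ring
  have hdS : ∀ v, dS U x v = ⟪p, v⟫ • b 1 + ⟪q, v⟫ • b 2 := by
    intro v
    have := hdecomp (dS U x v) (horth hU1 hU2 hxn v)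
    rw [hp v, hq v] at this; exact this
  have hxp : ⟪x, p⟫ = 0 := by
    have := hp x
    rw [dS_self hxn, inner_zero_right] at this
    rw [real_inner_comm]; exact this.symm ▸ (by rw [← this])
  have hxq : ⟪x, q⟫ = 0 := by
    have := hq x
    rw [dS_self hxn, inner_zero_right] at this
    rw [real_inner_comm, ← this]
  refine ⟨p, q, hnorm 1, hnorm 2, hij 1 2 (by decide), hdecomp, hxp, hxq, hdS⟩

end Aux3
section Aux4

set_option maxHeartbeats 1000000 in
lemma double_sum_sq (p q : Fin 4 → ℝ) :
    ∑ k : Fin 4, ∑ l : Fin 4, (p k * p l + q k * q l)^2 =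
      (∑ i : Fin 4, p i * p i)^2 + 2*(∑ i : Fin 4, p i * q i)^2
        + (∑ i : Fin 4, q i * q i)^2 := by
  simp only [Fin.sum_univ_four]; ring

variable {U : E4 → E3} {x : E4}

lemma formulas (hU1 : ContDiff ℝ (⊤ : ℕ∞) U) (hU2 : ∀ y ∈ S3, ‖U y‖ = 1) (hx : x ∈ S3)
    (f1 f2 : E3) (p q : E4)
    (h1 : ‖f1‖ = 1) (h2 : ‖f2‖ = 1) (h12 : ⟪f1, f2⟫ = 0)
    (hdS : ∀ v, dS U x v = ⟪p, v⟫ • f1 + ⟪q, v⟫ • f2) :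
    (∀ v w : E4, ⟪dS U x v, dS U x w⟫ = ⟪p, v⟫ * ⟪p, w⟫ + ⟪q, v⟫ * ⟪q, w⟫) ∧
    eDen U x = ⟪p, p⟫ + ⟪q, q⟫ ∧
    (∑ k : Fin 4, ∑ l : Fin 4, ⟪dS U x (ckf k x), dS U x (ckf l x)⟫^2) =
      ⟪p, p⟫^2 + 2*⟪p, q⟫^2 + ⟪q, q⟫^2 := by
  have hxn : ‖x‖ = 1 := by simpa [S3] using hx
  have h21 : ⟪f2, f1⟫ = 0 := by rw [real_inner_comm]; exact h12
  have h11 : ⟪f1, f1⟫ = 1 := inner_self_one h1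
  have h22 : ⟪f2, f2⟫ = 1 := inner_self_one h2
  have hIP : ∀ v w : E4, ⟪dS U x v, dS U x w⟫ = ⟪p, v⟫ * ⟪p, w⟫ + ⟪q, v⟫ * ⟪q, w⟫ := by
    intro v w
    rw [hdS v, hdS w]
    simp only [inner_add_add_self, inner_add_left, inner_add_right, real_inner_smul_left,
      real_inner_smul_right, h11, h22, h12, h21]
    ring
  have hinner : ∀ (r v : E4), ⟪r, v⟫ = ∑ i, r i * v i := by
    intro r v; rw [PiLp.inner_apply]; exact Finset.sum_congr rfl fun i _ => by simp [mul_comm]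
  have hsingle : ∀ (r : E4) (i : Fin 4), ⟪r, b4 i⟫ = r i := by
    intro r i
    rw [b4, EuclideanSpace.inner_single_right]
    simp
  refine ⟨hIP, ?_, ?_⟩
  · rw [eDen]
    have : ∀ i : Fin 4, ‖dS U x (b4 i)‖^2 = p i * p i + q i * q i := by
      intro i
      rw [← real_inner_self_eq_norm_sq, hIP, hsingle, hsingle]
    rw [Finset.sum_congr rfl fun i _ => this i, Finset.sum_add_distrib,
      hinner p p, hinner q q]
  · have hckf : ∀ k, dS U x (ckf k x) = dS U x (b4 k) := by
      intro k
      have : ckf k x = b4 k - x k • x := rfl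
      rw [this, dS_eq_dSC, map_sub, ContinuousLinearMap.map_smul, ← dS_eq_dSC, ← dS_eq_dSC,
        dS_self hxn, smul_zero, sub_zero]
    have hterm : ∀ k l : Fin 4, ⟪dS U x (ckf k x), dS U x (ckf l x)⟫^2
        = (p k * p l + q k * q l)^2 := by
      intro k l
      rw [hckf, hckf, hIP, hsingle, hsingle, hsingle, hsingle]
    calc ∑ k : Fin 4, ∑ l : Fin 4, ⟪dS U x (ckf k x), dS U x (ckf l x)⟫^2
        = ∑ k : Fin 4, ∑ l : Fin 4, (p k * p l + q k * q l)^2 := by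
          exact Finset.sum_congr rfl fun k _ => Finset.sum_congr rfl fun l _ => hterm k l
      _ = (∑ i : Fin 4, p i * p i)^2 + 2*(∑ i : Fin 4, p i * q i)^2
            + (∑ i : Fin 4, q i * q i)^2 := double_sum_sq _ _
      _ = ⟪p, p⟫^2 + 2*⟪p, q⟫^2 + ⟪q, q⟫^2 := by
          rw [hinner p p, hinner p q, hinner q q]

end Aux4
section Aux5
open scoped Pointwise

lemma sMes_openPos : ∀ O : Set (Metric.sphere (0:E4) 1), IsOpen O → O.Nonempty → sMes O ≠ 0 := by
  intro O hO ⟨y0, hy0⟩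
  obtain ⟨V, hV, hVO⟩ := isOpen_induced_iff.mp hO
  -- the open cone over O inside the unit ball
  set s : Set E4 := {z | z ≠ 0 ∧ ‖z‖ < 1} with hs
  have hsopen : IsOpen s := by
    have : s = {(0:E4)}ᶜ ∩ Metric.ball 0 1 := by
      ext z; simp [hs, Set.mem_setOf_eq, Metric.mem_ball, dist_zero_right]
    rw [this]
    exact isOpen_compl_singleton.inter Metric.isOpen_ball
  have hrcont : ContinuousOn (fun z : E4 => ‖z‖⁻¹ • z) s := by
    apply ContinuousOn.smul (f := fun z : E4 => ‖z‖⁻¹) (g := fun z : E4 => z)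
    · exact (continuousOn_id.norm.inv₀ (fun z hz => norm_ne_zero_iff.mpr hz.1))
    · exact continuousOn_id
  set W : Set E4 := s ∩ (fun z : E4 => ‖z‖⁻¹ • z) ⁻¹' V with hW
  have hWopen : IsOpen W := hrcont.isOpen_inter_preimage hsopen hV
  have hWne : W.Nonempty := by
    refine ⟨(1/2 : ℝ) • (y0 : E4), ?_, ?_⟩
    · have hy0n : ‖(y0 : E4)‖ = 1 := by simpa using y0.2
      constructor
      · intro hzero
        apply_fun norm at hzero
        rw [norm_smul, hy0n] at hzero
        norm_num at hzero
      · rw [norm_smul, hy0n]; norm_num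
    · have hy0n : ‖(y0 : E4)‖ = 1 := by simpa using y0.2
      have : ‖(1/2 : ℝ) • (y0 : E4)‖⁻¹ • ((1/2 : ℝ) • (y0 : E4)) = (y0 : E4) := by
        rw [norm_smul, hy0n, smul_smul]
        norm_num
      rw [Set.mem_preimage, this]
      have := hy0; rw [← hVO] at this; exact this
  have hsub : W ⊆ Set.Ioo (0:ℝ) 1 • (Subtype.val '' O) := by
    intro z hz
    obtain ⟨⟨hz0, hz1⟩, hzV⟩ := hz
    have hzn : ‖z‖ ≠ 0 := norm_ne_zero_iff.mpr hz0
    have hmem : ‖z‖⁻¹ • z ∈ Metric.sphere (0:E4) 1 := by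
      simp [norm_smul, abs_of_nonneg (inv_nonneg.mpr (norm_nonneg z)), inv_mul_cancel₀ hzn]
    refine Set.mem_smul.mpr ⟨‖z‖, ?_, ‖z‖⁻¹ • z, ?_, ?_⟩
    · exact ⟨norm_pos_iff.mpr hz0, hz1⟩
    · exact ⟨⟨‖z‖⁻¹ • z, hmem⟩, by rw [← hVO]; exact hzV, rfl⟩
    · rw [smul_smul, mul_inv_cancel₀ hzn, one_smul]
  have happ := (volume : Measure E4).toSphere_apply' (hO.measurableSet) 
  rw [show sMes = (volume : Measure E4).toSphere from rfl, happ]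
  have hvol : (0:ENNReal) < volume (Set.Ioo (0:ℝ) 1 • (Subtype.val '' O)) :=
    lt_of_lt_of_le (hWopen.measure_pos volume hWne) (measure_mono hsub)
  have hdim : (Module.finrank ℝ E4 : ENNReal) ≠ 0 := by
    rw [finrank_euclideanSpace_fin]; norm_num
  exact mul_ne_zero hdim hvol.ne'

instance : sMes.IsOpenPosMeasure := ⟨sMes_openPos⟩

end Aux5
section Aux6

variable {U : E4 → E3}

lemma coord_cont (k : Fin 4) : Continuous (fun x : E4 => x k) :=
  (EuclideanSpace.proj k : E4 →L[ℝ] ℝ).continuous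

lemma dS_cont (hU1 : ContDiff ℝ (⊤ : ℕ∞) U) {w : E4 → E4} (hw : Continuous w) :
    Continuous (fun x => fderiv ℝ U x (tproj x (w x))) := by
  have hfd : Continuous (fderiv ℝ U) := hU1.continuous_fderiv (by simp)
  have htp : Continuous (fun x => tproj x (w x)) := by
    simp only [tproj]
    exact hw.sub (Continuous.smul (f := fun x : E4 => ⟪x, w x⟫) (g := fun x : E4 => x) (continuous_id.inner hw) continuous_id)
  exact hfd.clm_apply htp

lemma integrand_cont (hU1 : ContDiff ℝ (⊤ : ℕ∞) U) :
    Continuous (fun x => (eDen U x)^2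
      - 2 * ∑ k : Fin 4, ∑ l : Fin 4, ⟪dS U x (ckf k x), dS U x (ckf l x)⟫^2) := by
  have heD : Continuous (eDen U) := by
    unfold eDen
    apply continuous_finset_sum
    intro i _
    exact ((dS_cont hU1 continuous_const).norm).pow 2
  have hc : ∀ k : Fin 4, Continuous (fun x => dS U x (ckf k x)) := by
    intro k
    unfold dS
    apply dS_cont hU1
    unfold ckf
    exact continuous_const.sub ((coord_cont k).smul continuous_id)
  refine ((heD.pow 2).sub (continuous_const.mul ?_))
  apply continuous_finset_sum; intro k _
  apply continuous_finset_sum; intro l _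
  exact ((hc k).inner (hc l)).pow 2

end Aux6
section Aux7

variable {U : E4 → E3}

instance : IsFiniteMeasure sMes := by unfold sMes; infer_instance

instance : IsFiniteMeasureOnCompacts sMes :=
  ⟨fun _ _ => measure_lt_top sMes _⟩

lemma integrand_nonpos (hU1 : ContDiff ℝ (⊤ : ℕ∞) U) (hU2 : ∀ y ∈ S3, ‖U y‖ = 1) :
    ∀ z ∈ S3, (eDen U z)^2
      - 2 * ∑ k : Fin 4, ∑ l : Fin 4, ⟪dS U z (ckf k z), dS U z (ckf l z)⟫^2 ≤ 0 := by
  intro z hz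
  obtain ⟨f1, f2, p, q, h1, h2, h12, _, _, _, hdS⟩ := master hU1 hU2 hz
  obtain ⟨_, heD, hsum⟩ := formulas hU1 hU2 hz f1 f2 p q h1 h2 h12 hdS
  rw [heD, hsum]
  nlinarith [sq_nonneg (⟪p,p⟫ - ⟪q,q⟫), sq_nonneg ⟪p,q⟫]

lemma integrand_zero (hU1 : ContDiff ℝ (⊤ : ℕ∞) U) (hU2 : ∀ y ∈ S3, ‖U y‖ = 1)
    (h : 0 ≤ sInt (fun x => (eDen U x)^2
        - 2 * ∑ k : Fin 4, ∑ l : Fin 4, ⟪dS U x (ckf k x), dS U x (ckf l x)⟫^2)) :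
    ∀ x ∈ S3, (eDen U x)^2
      - 2 * ∑ k : Fin 4, ∑ l : Fin 4, ⟪dS U x (ckf k x), dS U x (ckf l x)⟫^2 = 0 := by
  set g : E4 → ℝ := fun x => (eDen U x)^2
      - 2 * ∑ k : Fin 4, ∑ l : Fin 4, ⟪dS U x (ckf k x), dS U x (ckf l x)⟫^2 with hg
  have hgc : Continuous g := integrand_cont hU1
  have hgS : Continuous (fun z : Metric.sphere (0:E4) 1 => g ↑z) :=
    hgc.comp continuous_subtype_val
  have hInt : Integrable (fun z : Metric.sphere (0:E4) 1 => g ↑z) sMes := by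
    have hcs : HasCompactSupport (fun z : Metric.sphere (0:E4) 1 => g ↑z) := by
      apply IsCompact.of_isClosed_subset isCompact_univ (isClosed_tsupport _) (Set.subset_univ _)
    exact hgS.integrable_of_hasCompactSupport hcs
  have hle : ∀ z : Metric.sphere (0:E4) 1, g ↑z ≤ 0 := fun z =>
    integrand_nonpos hU1 hU2 z z.2
  have hint0 : ∫ z : Metric.sphere (0:E4) 1, g ↑z ∂sMes = 0 :=
    le_antisymm (integral_nonpos hle) h
  have hzero : (fun z : Metric.sphere (0:E4) 1 => -g ↑z) =ᵐ[sMes] 0 := by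
    rw [← integral_eq_zero_iff_of_nonneg (fun z => neg_nonneg.mpr (hle z)) hInt.neg]
    rw [integral_neg, hint0, neg_zero]
  have heq : (fun z : Metric.sphere (0:E4) 1 => -g ↑z) = 0 :=
    (Continuous.ae_eq_iff_eq sMes hgS.neg continuous_const).mp hzero
  intro x hx
  have := congrFun heq ⟨x, hx⟩
  simpa using this

end Aux7

/-- If `u : S³ → S²` is a smooth harmonic map with
`∫_{S³}(|du|⁴ - 2|du ⊗̇ du|²) ≥ 0`, then at every `x ∈ S³` either `du_x = 0` or `du_x`
is horizontally conformal: the restriction of `du_x` to the orthogonal complement of its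
kernel in `T_x S³` is a conformal linear isomorphism onto `T_{u(x)}S²`; i.e. `u` is a
harmonic horizontally weakly conformal map (a harmonic morphism). -/
theorem nonneg_integral_implies_horizontally_weakly_conformal
    (U : E4 → E3) (hU : IsHarmonicMapS3S2 U)
    (h : 0 ≤ sInt (fun x => (eDen U x)^2
        - 2 * ∑ k : Fin 4, ∑ l : Fin 4, ⟪dS U x (ckf k x), dS U x (ckf l x)⟫^2)) :
    ∀ x ∈ S3,
      (∀ v : E4, dS U x v = 0) ∨
      ∃ lam : ℝ, 0 < lam ∧
        (∀ a : E3, ⟪U x, a⟫ = 0 → ∃ v : E4, ⟪x, v⟫ = 0 ∧ dS U x v = a) ∧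
        (∀ v w : E4, ⟪x, v⟫ = 0 → ⟪x, w⟫ = 0 →
          (∀ z : E4, ⟪x, z⟫ = 0 → dS U x z = 0 → ⟪z, v⟫ = 0 ∧ ⟪z, w⟫ = 0) →
          ⟪dS U x v, dS U x w⟫ = lam^2 * ⟪v, w⟫) := by
  obtain ⟨hU1, hU2, -⟩ := hU
  intro x hx
  obtain ⟨f1, f2, p, q, h1, h2, h12, hdecomp, hxp, hxq, hdS⟩ := master hU1 hU2 hx
  obtain ⟨hIP, heD, hsum⟩ := formulas hU1 hU2 hx f1 f2 p q h1 h2 h12 hdS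
  have hz := integrand_zero hU1 hU2 h x hx
  rw [heD, hsum] at hz
  set A := ⟪p, p⟫ with hAdef
  set B := ⟪q, q⟫ with hBdef
  set C := ⟪p, q⟫ with hCdef
  have hA : (0:ℝ) ≤ A := real_inner_self_nonneg
  have h4 : (A - B)^2 + 4*C^2 = 0 := by linear_combination -hz
  have hC2 : C^2 = 0 := by nlinarith [sq_nonneg (A - B)]
  have hC : C = 0 := by
    have := sq_eq_zero_iff.mp hC2; exact this
  have hAB : A = B := by
    have h5 : (A - B)^2 = 0 := by nlinarith [sq_nonneg C]
    have := sq_eq_zero_iff.mp h5; linarith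
  have hqp : ⟪q, p⟫ = C := by rw [hCdef, real_inner_comm]
  by_cases hA0 : A = 0
  · left
    have hp0 : p = 0 := inner_self_eq_zero.mp (by rw [← hAdef]; exact hA0)
    have hq0 : q = 0 := inner_self_eq_zero.mp (by rw [← hBdef, ← hAB]; exact hA0)
    intro v
    rw [hdS v, hp0, hq0]
    simp
  · right
    have hApos : (0:ℝ) < A := lt_of_le_of_ne hA (Ne.symm hA0)
    refine ⟨Real.sqrt A, Real.sqrt_pos.mpr hApos, ?_, ?_⟩
    · -- surjectivity
      intro a ha
      refine ⟨A⁻¹ • (⟪f1, a⟫ • p + ⟪f2, a⟫ • q), ?_, ?_⟩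
      · rw [real_inner_smul_right, inner_add_right, real_inner_smul_right,
          real_inner_smul_right, hxp, hxq]
        ring
      · have hpv : ⟪p, A⁻¹ • (⟪f1, a⟫ • p + ⟪f2, a⟫ • q)⟫ = ⟪f1, a⟫ := by
          rw [real_inner_smul_right, inner_add_right, real_inner_smul_right,
            real_inner_smul_right, ← hAdef, ← hCdef, hC]
          field_simp
          ring
        have hqv : ⟪q, A⁻¹ • (⟪f1, a⟫ • p + ⟪f2, a⟫ • q)⟫ = ⟪f2, a⟫ := by
          rw [real_inner_smul_right, inner_add_right, real_inner_smul_right,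
            real_inner_smul_right, ← hBdef, hqp, hC, ← hAB]
          field_simp
          ring
        rw [hdS, hpv, hqv]
        exact (hdecomp a ha).symm
    · -- conformality
      intro v w hv hw hker
      set z := w - A⁻¹ • (⟪p, w⟫ • p + ⟪q, w⟫ • q) with hzdef
      have hz1 : ⟪x, z⟫ = 0 := by
        rw [hzdef, inner_sub_right, real_inner_smul_right, inner_add_right,
          real_inner_smul_right, real_inner_smul_right, hxp, hxq, hw]
        ring
      have hpz : ⟪p, z⟫ = 0 := by
        rw [hzdef, inner_sub_right, real_inner_smul_right, inner_add_right,
          real_inner_smul_right, real_inner_smul_right, ← hAdef, ← hCdef, hC]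
        field_simp
        ring
      have hqz : ⟪q, z⟫ = 0 := by
        rw [hzdef, inner_sub_right, real_inner_smul_right, inner_add_right,
          real_inner_smul_right, real_inner_smul_right, ← hBdef, hqp, hC, ← hAB]
        field_simp
        ring
      have hdz : dS U x z = 0 := by
        rw [hdS z, hpz, hqz]; simp
      obtain ⟨hzv, -⟩ := hker z hz1 hdz
      have hvw : ⟪v, w⟫ = A⁻¹ * (⟪p, v⟫ * ⟪p, w⟫ + ⟪q, v⟫ * ⟪q, w⟫) := by
        have : ⟪z, v⟫ = ⟪w, v⟫ - A⁻¹ * (⟪p, w⟫ * ⟪p, v⟫ + ⟪q, w⟫ * ⟪q, v⟫) := by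
          rw [hzdef, inner_sub_left, real_inner_smul_left, inner_add_left,
            real_inner_smul_left, real_inner_smul_left]
        rw [hzv] at this
        rw [real_inner_comm v w] at this
        linarith [this]
      rw [hIP v w, hvw, Real.sq_sqrt hA]
      field_simp
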